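/- arXiv:1607.02330 — 4 statements merged into one kernel-verified Lean document; each statement's English description precedes it below -/
import Mathlib

section
/- For a finite random variable X, J_α(X;X) = H_{α/(2α−1)}(X) if α > 1/2, and J_α(X;X) = (α/(1−α)) H_∞(X) if α ∈ (0, 1/2], where J_α(X;X) is computed for the joint PMF P_XY(x,y) = P_X(x) 1{x=y}. -/
open scoped ENNReal BigOperators
open Finset

/-- Kullback-Leibler divergence between two PMFs on a finite set, valued in `EReal`
(`⊤` when `P` is not absolutely continuous w.r.t. `Q`). -/
noncomputable def klDiv {X : Type*} [Fintype X] (P Q : X → ℝ≥0∞) : EReal :=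
  if ∀ x, Q x = 0 → P x = 0 then
    (((∑ x, (P x).toReal * Real.log ((P x).toReal / (Q x).toReal)) : ℝ) : EReal)
  else ⊤

/-- Rényi divergence of order `α` (KL divergence at `α = 1`).  The ENNReal conventions
`0 * ⊤ = 0` and `0 ^ y = ⊤` for `y < 0` encode `0/0 = 0` and `p/0 = ∞`. -/
noncomputable def renyiDiv {X : Type*} [Fintype X] (α : ℝ) (P Q : X → ℝ≥0∞) : EReal :=
  if α = 1 then klDiv P Q
  else (((α - 1)⁻¹ : ℝ) : EReal) * ENNReal.log (∑ x, P x ^ α * Q x ^ (1 - α))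

/-- Relative α-entropy (Sundaresan's divergence); KL divergence at `α = 1`. -/
noncomputable def relAlphaEnt {X : Type*} [Fintype X] (α : ℝ) (P Q : X → ℝ≥0∞) : EReal :=
  if α = 1 then klDiv P Q
  else ((α / (1 - α) : ℝ) : EReal) * ENNReal.log (∑ x, P x * Q x ^ (α - 1))
    + ENNReal.log (∑ x, Q x ^ α)
    - (((1 - α)⁻¹ : ℝ) : EReal) * ENNReal.log (∑ x, P x ^ α)

/-- The set of PMFs on a finite type, as a subtype. -/
def PMFon (X : Type*) [Fintype X] : Type _ := {p : X → ℝ≥0∞ // ∑ x, p x = 1}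

noncomputable def margX {X Y : Type*} [Fintype X] [Fintype Y] (P : X × Y → ℝ≥0∞) : X → ℝ≥0∞ :=
  fun x => ∑ y, P (x, y)

noncomputable def margY {X Y : Type*} [Fintype X] [Fintype Y] (P : X × Y → ℝ≥0∞) : Y → ℝ≥0∞ :=
  fun y => ∑ x, P (x, y)

/-- Mutual information of a joint PMF. -/
noncomputable def mutualInfo {X Y : Type*} [Fintype X] [Fintype Y] (P : X × Y → ℝ≥0∞) : EReal :=
  klDiv P (fun p => margX P p.1 * margY P p.2)

/-- The dependence measure `J_α`. -/
noncomputable def Jalpha {X Y : Type*} [Fintype X] [Fintype Y] (α : ℝ) (P : X × Y → ℝ≥0∞) :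
    EReal :=
  ⨅ (Q : PMFon X × PMFon Y), renyiDiv α P (fun p => Q.1.1 p.1 * Q.2.1 p.2)

/-- The dependence measure `K_α`. -/
noncomputable def Kalpha {X Y : Type*} [Fintype X] [Fintype Y] (α : ℝ) (P : X × Y → ℝ≥0∞) :
    EReal :=
  ⨅ (Q : PMFon X × PMFon Y), relAlphaEnt α P (fun p => Q.1.1 p.1 * Q.2.1 p.2)

/-- Rényi entropy of order `β`. -/
noncomputable def renyiEnt {X : Type*} [Fintype X] (β : ℝ) (P : X → ℝ≥0∞) : EReal :=
  if β = 1 then (((∑ x, (P x).toReal * Real.log (P x).toReal⁻¹ : ℝ)) : EReal)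
  else (((1 - β)⁻¹ : ℝ) : EReal) * ENNReal.log (∑ x, P x ^ β)

/-- Min-entropy. -/
noncomputable def minEnt {X : Type*} [Fintype X] (P : X → ℝ≥0∞) : EReal :=
  - ENNReal.log (⨆ x, P x)

/-!
Against the diagonal joint law, the Rényi divergence from `Q₁ ⊗ Q₂` depends on `(Q₁, Q₂)` only
through the geometric mean `b = √(Q₁ Q₂)`, whose total mass is at most `1` by Cauchy–Schwarz:
it is `(α - 1)⁻¹ log ∑ P ^ α b ^ (2 - 2α)`. For `α > 1/2` put `s = 2α - 1` and
`w = P ^ (α / s)`, so that the sum is `∑ w ^ s b ^ (1 - s)`. Hölder's inequality bounds it by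
`(∑ w) ^ s` from above when `s < 1`, and its reverse from below when `s > 1`; either way the
divergence is at least `(α - 1)⁻¹ log (∑ w) ^ s = H_{α/s}(P)`, with equality at
`Q₁ = Q₂ = w / ∑ w`. For `α ≤ 1/2`, `b ^ (2 - 2α) ≤ b` bounds the sum by
`(max P) ^ α`, attained by the point mass at a mode of `P`. At `α = 1` the divergence splits as
`H(P) + D(P ‖ Q₁) + D(P ‖ Q₂)` and Gibbs' inequality concludes.
-/

namespace ENNReal

variable {ι : Type*} [Fintype ι]

open MeasureTheory in
theorem sum_rpow_mul_rpow_le {p q : ℝ} (hp : 0 ≤ p) (hq : 0 ≤ q) (hpq : p + q = 1)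
    (f g : ι → ℝ≥0∞) :
    ∑ i, f i ^ p * g i ^ q ≤ (∑ i, f i) ^ p * (∑ i, g i) ^ q := by
  let _ : MeasurableSpace ι := ⊤
  simpa [lintegral_fintype] using lintegral_mul_norm_pow_le (μ := Measure.count)
    (measurable_of_countable f).aemeasurable (measurable_of_countable g).aemeasurable hp hq hpq

theorem sum_rpow_mul_rpow_le_of_sum_le_one {s : ℝ} (hs₀ : 0 ≤ s) (hs₁ : s ≤ 1) (w : ι → ℝ≥0∞)
    {b : ι → ℝ≥0∞} (hb : ∑ i, b i ≤ 1) :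
    ∑ i, w i ^ s * b i ^ (1 - s) ≤ (∑ i, w i) ^ s :=
  calc ∑ i, w i ^ s * b i ^ (1 - s)
      ≤ (∑ i, w i) ^ s * (∑ i, b i) ^ (1 - s) :=
        sum_rpow_mul_rpow_le hs₀ (by linarith) (by ring) w b
    _ ≤ (∑ i, w i) ^ s := mul_le_of_le_one_right' (rpow_le_one hb (by linarith))

theorem rpow_sum_le_sum_rpow_mul_rpow_of_sum_le_one {s : ℝ} (hs : 1 < s) {w b : ι → ℝ≥0∞}
    (hw : ∀ i, w i ≠ ⊤) (hb : ∑ i, b i ≤ 1) :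
    (∑ i, w i) ^ s ≤ ∑ i, w i ^ s * b i ^ (1 - s) := by
  by_cases hsupp : ∃ i, w i ≠ 0 ∧ b i = 0
  · obtain ⟨i, hwi, hbi⟩ := hsupp
    have hi : w i ^ s * b i ^ (1 - s) = ⊤ := by
      rw [hbi, zero_rpow_of_neg (by linarith)]
      exact mul_top (by simp [rpow_eq_zero_iff, hwi, hw i])
    rw [(sum_eq_top (f := fun i => w i ^ s * b i ^ (1 - s))).2 ⟨i, mem_univ i, hi⟩]
    exact le_top
  push Not at hsupp
  have hs₀ : s ≠ 0 := by positivity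
  have hs_inv : 0 ≤ 1 - s⁻¹ := sub_nonneg.2 (inv_le_one_of_one_le₀ hs.le)
  -- `w = f ^ s⁻¹ * b ^ (1 - s⁻¹)` for `f = w ^ s * b ^ (1 - s)`, so Hölder applies to `f` and `b`
  have hw_eq : ∀ i, w i = (w i ^ s * b i ^ (1 - s)) ^ s⁻¹ * b i ^ (1 - s⁻¹) := by
    intro i
    rcases eq_or_ne (w i) 0 with hwi | hwi
    · simp [hwi, zero_rpow_of_pos (by positivity : 0 < s),
        zero_rpow_of_pos (by positivity : 0 < s⁻¹)]
    have hbi := hsupp i hwi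
    have hbi' : b i ≠ ⊤ := ne_top_of_le_ne_top one_ne_top
      ((single_le_sum (fun j _ => zero_le) (mem_univ i)).trans hb)
    rw [mul_rpow_of_nonneg _ _ (by positivity), rpow_rpow_inv hs₀, mul_assoc, ← rpow_mul,
      ← rpow_add _ _ hbi hbi', show (1 - s) * s⁻¹ + (1 - s⁻¹) = 0 by field_simp; ring,
      rpow_zero, mul_one]
  calc (∑ i, w i) ^ s
      = (∑ i, (w i ^ s * b i ^ (1 - s)) ^ s⁻¹ * b i ^ (1 - s⁻¹)) ^ s := by
        rw [← sum_congr rfl fun i _ => hw_eq i]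
    _ ≤ ((∑ i, w i ^ s * b i ^ (1 - s)) ^ s⁻¹ * (∑ i, b i) ^ (1 - s⁻¹)) ^ s := by
        gcongr
        exact sum_rpow_mul_rpow_le (by positivity) hs_inv (by ring) _ _
    _ ≤ ((∑ i, w i ^ s * b i ^ (1 - s)) ^ s⁻¹) ^ s := by
        gcongr
        exact mul_le_of_le_one_right' (rpow_le_one hb hs_inv)
    _ = ∑ i, w i ^ s * b i ^ (1 - s) := rpow_inv_rpow hs₀ _

theorem sum_rpow_mul_div_sum_rpow (s : ℝ) {w : ι → ℝ≥0∞} (hw : ∀ i, w i ≠ ⊤)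
    (h₀ : ∑ i, w i ≠ 0) (h_top : ∑ i, w i ≠ ⊤) :
    ∑ i, w i ^ s * (w i / ∑ j, w j) ^ (1 - s) = (∑ i, w i) ^ s := by
  set T := ∑ j, w j
  have hterm : ∀ i, w i ^ s * (w i / T) ^ (1 - s) = w i * T ^ (s - 1) := fun i => by
    rw [div_eq_mul_inv, mul_rpow_of_ne_top (hw i) (inv_ne_top.2 h₀), ← mul_assoc,
      ← rpow_add_of_add_pos (hw i) _ _ (by linarith), inv_rpow, ← rpow_neg]
    simp
  calc ∑ i, w i ^ s * (w i / T) ^ (1 - s) = T ^ (1 + (s - 1)) := by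
        rw [sum_congr rfl fun i _ => hterm i, ← sum_mul, rpow_add _ _ h₀ h_top, rpow_one]
    _ = T ^ s := by ring_nf

theorem sum_rpow_mul_rpow_le_iSup_rpow {a r : ℝ} (ha : 0 ≤ a) (hr : 1 ≤ r) (P : ι → ℝ≥0∞)
    {b : ι → ℝ≥0∞} (hb : ∑ i, b i ≤ 1) :
    ∑ i, P i ^ a * b i ^ r ≤ (⨆ i, P i) ^ a :=
  calc ∑ i, P i ^ a * b i ^ r ≤ ∑ i, (⨆ j, P j) ^ a * b i := by
        refine sum_le_sum fun i _ => mul_le_mul' (rpow_le_rpow (le_iSup P i) ha) ?_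
        have hbi : b i ≤ 1 := (single_le_sum (fun j _ => zero_le) (mem_univ i)).trans hb
        simpa using rpow_le_rpow_of_exponent_ge hbi hr
    _ = (⨆ j, P j) ^ a * ∑ i, b i := (mul_sum _ _ _).symm
    _ ≤ (⨆ j, P j) ^ a := mul_le_of_le_one_right' hb

end ENNReal

theorem iInf_coe_mul_log_eq_of_le {ι : Type*} {c : ℝ} (hc : 0 ≤ c) {g : ι → ℝ≥0∞} (i₀ : ι)
    (h : ∀ i, g i₀ ≤ g i) :
    ⨅ i, (c : EReal) * ENNReal.log (g i) = c * ENNReal.log (g i₀) :=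
  le_antisymm (iInf_le _ i₀) <| le_iInf fun i =>
    mul_le_mul_of_nonneg_left (ENNReal.log_le_log (h i)) (EReal.coe_nonneg.2 hc)

theorem iInf_coe_mul_log_eq_of_ge {ι : Type*} {c : ℝ} (hc : c ≤ 0) {g : ι → ℝ≥0∞} (i₀ : ι)
    (h : ∀ i, g i ≤ g i₀) :
    ⨅ i, (c : EReal) * ENNReal.log (g i) = c * ENNReal.log (g i₀) :=
  le_antisymm (iInf_le _ i₀) <| le_iInf fun i => by
    rw [mul_comm, mul_comm (c : EReal)]
    exact EReal.mul_le_mul_of_nonpos_right (ENNReal.log_le_log (h i)) (EReal.coe_nonpos.2 hc)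

theorem coe_mul_log_rpow (c y : ℝ) (x : ℝ≥0∞) :
    (c : EReal) * ENNReal.log (x ^ y) = ((c * y : ℝ) : EReal) * ENNReal.log x := by
  rw [ENNReal.log_rpow, ← mul_assoc, ← EReal.coe_mul]

theorem sub_le_mul_log_div {p q : ℝ} (hp : 0 < p) (hq : 0 < q) :
    p - q ≤ p * Real.log (p / q) := by
  have h := Real.one_sub_inv_le_log_of_pos (div_pos hp hq)
  rw [inv_div] at h
  calc p - q = p * (1 - q / p) := by field_simp
    _ ≤ p * Real.log (p / q) := mul_le_mul_of_nonneg_left h hp.le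

theorem mul_log_inv_add_sub_add_sub_le {p q₁ q₂ : ℝ} (hp : 0 ≤ p) (hq₁ : 0 ≤ q₁) (hq₂ : 0 ≤ q₂)
    (hac : q₁ * q₂ = 0 → p = 0) :
    p * Real.log p⁻¹ + (p - q₁) + (p - q₂) ≤ p * Real.log (p / (q₁ * q₂)) := by
  rcases hp.eq_or_lt with rfl | hp
  · simp only [zero_mul, zero_sub]
    linarith
  have hq : q₁ * q₂ ≠ 0 := fun h => hp.ne' (hac h)
  have hq₁ : 0 < q₁ := lt_of_le_of_ne hq₁ (Ne.symm (left_ne_zero_of_mul hq))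
  have hq₂ : 0 < q₂ := lt_of_le_of_ne hq₂ (Ne.symm (right_ne_zero_of_mul hq))
  have hsplit : p * Real.log (p / (q₁ * q₂))
      = p * Real.log p⁻¹ + p * Real.log (p / q₁) + p * Real.log (p / q₂) := by
    rw [Real.log_div hp.ne' hq, Real.log_mul hq₁.ne' hq₂.ne', Real.log_inv,
      Real.log_div hp.ne' hq₁.ne', Real.log_div hp.ne' hq₂.ne']
    ring
  rw [hsplit]
  linarith [sub_le_mul_log_div hp hq₁, sub_le_mul_log_div hp hq₂]

section Finite

variable {X : Type*}

noncomputable def geomMean (Q₁ Q₂ : X → ℝ≥0∞) (x : X) : ℝ≥0∞ := (Q₁ x * Q₂ x) ^ (2⁻¹ : ℝ)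

theorem geomMean_self (Q : X → ℝ≥0∞) : geomMean Q Q = Q := by
  ext x
  rw [geomMean, ← sq, ← ENNReal.rpow_two, ENNReal.rpow_rpow_inv two_ne_zero]

variable [Fintype X]

theorem ne_top_of_sum_eq_one {P : X → ℝ≥0∞} (hP : ∑ x, P x = 1) (x : X) : P x ≠ ⊤ :=
  ENNReal.sum_ne_top.1 (hP ▸ ENNReal.one_ne_top) x (mem_univ x)

theorem sum_toReal_eq_one {P : X → ℝ≥0∞} (hP : ∑ x, P x = 1) : ∑ x, (P x).toReal = 1 := by
  rw [← ENNReal.toReal_sum fun x _ => ne_top_of_sum_eq_one hP x, hP, ENNReal.toReal_one]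

theorem exists_ne_zero_of_sum_eq_one {P : X → ℝ≥0∞} (hP : ∑ x, P x = 1) : ∃ x, P x ≠ 0 := by
  by_contra! h
  simp [h] at hP

theorem sum_geomMean_le_one {Q₁ Q₂ : X → ℝ≥0∞} (h₁ : ∑ x, Q₁ x = 1) (h₂ : ∑ x, Q₂ x = 1) :
    ∑ x, geomMean Q₁ Q₂ x ≤ 1 :=
  calc ∑ x, geomMean Q₁ Q₂ x = ∑ x, Q₁ x ^ (2⁻¹ : ℝ) * Q₂ x ^ (1 - 2⁻¹ : ℝ) := by
        norm_num [geomMean, ENNReal.mul_rpow_of_nonneg]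
    _ ≤ (∑ x, Q₁ x) ^ (2⁻¹ : ℝ) * (∑ x, Q₂ x) ^ (1 - 2⁻¹ : ℝ) :=
        ENNReal.sum_rpow_mul_rpow_le (by norm_num) (by norm_num) (by ring) _ _
    _ = 1 := by simp [h₁, h₂]

theorem sum_mul_log_inv_le_sum_mul_log_div {p q₁ q₂ : X → ℝ} (hp : ∀ x, 0 ≤ p x)
    (hq₁ : ∀ x, 0 ≤ q₁ x) (hq₂ : ∀ x, 0 ≤ q₂ x) (hp_sum : ∑ x, p x = 1) (hq₁_sum : ∑ x, q₁ x = 1)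
    (hq₂_sum : ∑ x, q₂ x = 1) (hac : ∀ x, q₁ x * q₂ x = 0 → p x = 0) :
    ∑ x, p x * Real.log (p x)⁻¹ ≤ ∑ x, p x * Real.log (p x / (q₁ x * q₂ x)) :=
  calc ∑ x, p x * Real.log (p x)⁻¹
      = ∑ x, (p x * Real.log (p x)⁻¹ + (p x - q₁ x) + (p x - q₂ x)) := by
        simp only [sum_add_distrib, sum_sub_distrib, hp_sum, hq₁_sum, hq₂_sum, sub_self, add_zero]
    _ ≤ ∑ x, p x * Real.log (p x / (q₁ x * q₂ x)) := sum_le_sum fun x _ =>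
        mul_log_inv_add_sub_add_sub_le (hp x) (hq₁ x) (hq₂ x) (hac x)

theorem sum_prod_eq_sum_diag {M : Type*} [AddCommMonoid M] {g : X × X → M}
    (h : ∀ x y, x ≠ y → g (x, y) = 0) : ∑ p, g p = ∑ x, g (x, x) := by
  rw [Fintype.sum_prod_type]
  exact sum_congr rfl fun x _ => Fintype.sum_eq_single x fun y hy => h x y (Ne.symm hy)

theorem renyiEnt_div_two_mul_sub_one {α : ℝ} (hα : 1 / 2 < α) (hα₁ : α ≠ 1) (P : X → ℝ≥0∞) :
    renyiEnt (α / (2 * α - 1)) P =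
      ((α - 1)⁻¹ : ℝ) * ENNReal.log ((∑ x, P x ^ (α / (2 * α - 1))) ^ (2 * α - 1)) := by
  have hs : 2 * α - 1 ≠ 0 := by linarith
  have hβ₁ : α / (2 * α - 1) ≠ 1 := fun h => hα₁ (by rw [div_eq_one_iff_eq hs] at h; linarith)
  rw [renyiEnt, if_neg hβ₁, coe_mul_log_rpow]
  congr 2
  rw [one_sub_div hs, inv_div, div_eq_inv_mul, show 2 * α - 1 - α = α - 1 by ring]

theorem coe_div_one_sub_mul_minEnt (α : ℝ) (P : X → ℝ≥0∞) :
    ((α / (1 - α) : ℝ) : EReal) * minEnt P =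
      ((α - 1)⁻¹ : ℝ) * ENNReal.log ((⨆ x, P x) ^ α) := by
  rw [minEnt, coe_mul_log_rpow, mul_neg, ← EReal.neg_mul, ← EReal.coe_neg, ← div_neg, neg_sub,
    div_eq_inv_mul]

noncomputable def PMFon.normalize (w : X → ℝ≥0∞) (h₀ : ∑ x, w x ≠ 0) (h_top : ∑ x, w x ≠ ⊤) :
    PMFon X :=
  ⟨fun x => w x / ∑ y, w y, by
    simp only [div_eq_mul_inv, ← sum_mul]
    exact ENNReal.mul_inv_cancel h₀ h_top⟩

variable [DecidableEq X]

def PMFon.dirac (x₀ : X) : PMFon X := ⟨Pi.single x₀ 1, by simp⟩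

def diagJoint (P : X → ℝ≥0∞) : X × X → ℝ≥0∞ := fun p => if p.1 = p.2 then P p.1 else 0

theorem renyiDiv_diagJoint {α : ℝ} (hα₀ : 0 < α) (hα₁ : α ≠ 1) (P Q₁ Q₂ : X → ℝ≥0∞) :
    renyiDiv α (diagJoint P) (fun p => Q₁ p.1 * Q₂ p.2) =
      ((α - 1)⁻¹ : ℝ) * ENNReal.log (∑ x, P x ^ α * geomMean Q₁ Q₂ x ^ (2 * (1 - α))) := by
  rw [renyiDiv, if_neg hα₁, sum_prod_eq_sum_diag fun x y hxy => by
    simp [diagJoint, hxy, ENNReal.zero_rpow_of_pos hα₀]]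
  simp only [diagJoint, if_true, geomMean, ← ENNReal.rpow_mul,
    show (2⁻¹ : ℝ) * (2 * (1 - α)) = 1 - α by ring]

theorem klDiv_diagJoint (P Q₁ Q₂ : X → ℝ≥0∞) :
    klDiv (diagJoint P) (fun p => Q₁ p.1 * Q₂ p.2) =
      if ∀ x, Q₁ x * Q₂ x = 0 → P x = 0 then
        ((∑ x, (P x).toReal * Real.log ((P x).toReal / ((Q₁ x).toReal * (Q₂ x).toReal)) : ℝ) :
          EReal)
      else ⊤ := by
  have hac : (∀ p : X × X, Q₁ p.1 * Q₂ p.2 = 0 → diagJoint P p = 0) ↔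
      ∀ x, Q₁ x * Q₂ x = 0 → P x = 0 := by
    refine ⟨fun h x => by simpa [diagJoint] using h (x, x), fun h ⟨x, y⟩ hxy => ?_⟩
    by_cases hxy' : x = y
    · subst hxy'
      simpa [diagJoint] using h x hxy
    · simp [diagJoint, hxy']
  rw [klDiv, sum_prod_eq_sum_diag fun x y hxy => by simp [diagJoint, hxy]]
  simp only [hac]
  simp only [diagJoint, if_true, ENNReal.toReal_mul]

theorem Jalpha_one_diagJoint {P : X → ℝ≥0∞} (hP : ∑ x, P x = 1) :
    Jalpha 1 (diagJoint P) = renyiEnt 1 P := by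
  simp only [Jalpha, renyiDiv, renyiEnt, if_true]
  refine le_antisymm (iInf_le_of_le (⟨P, hP⟩, ⟨P, hP⟩) (le_of_eq ?_)) (le_iInf fun Q => ?_)
  · rw [klDiv_diagJoint, if_pos fun x hx => mul_self_eq_zero.1 hx, EReal.coe_eq_coe_iff]
    refine sum_congr rfl fun x _ => ?_
    rcases eq_or_ne (P x).toReal 0 with h | h
    · simp [h]
    · rw [div_mul_cancel_left₀ h]
  · rw [klDiv_diagJoint]
    split_ifs with hac
    · refine EReal.coe_le_coe_iff.2 (sum_mul_log_inv_le_sum_mul_log_div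
        (fun _ => ENNReal.toReal_nonneg) (fun _ => ENNReal.toReal_nonneg)
        (fun _ => ENNReal.toReal_nonneg) (sum_toReal_eq_one hP) (sum_toReal_eq_one Q.1.2)
        (sum_toReal_eq_one Q.2.2) fun x hx => ?_)
      rw [← ENNReal.toReal_mul, ENNReal.toReal_eq_zero_iff] at hx
      rcases hx with hx | hx
      · rw [hac x hx, ENNReal.toReal_zero]
      · exact absurd hx (ENNReal.mul_ne_top (ne_top_of_sum_eq_one Q.1.2 x)
          (ne_top_of_sum_eq_one Q.2.2 x))
    · exact le_top

theorem Jalpha_diagJoint_of_half_lt {P : X → ℝ≥0∞} (hP : ∑ x, P x = 1) {α : ℝ} (hα : 1 / 2 < α)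
    (hα₁ : α ≠ 1) : Jalpha α (diagJoint P) = renyiEnt (α / (2 * α - 1)) P := by
  have hs : 0 < 2 * α - 1 := by linarith
  have hβ : 0 < α / (2 * α - 1) := div_pos (by linarith) hs
  set s := 2 * α - 1
  set w : X → ℝ≥0∞ := fun x => P x ^ (α / s)
  have hw_top : ∀ x, w x ≠ ⊤ := fun x =>
    ENNReal.rpow_ne_top_of_nonneg hβ.le (ne_top_of_sum_eq_one hP x)
  have hT₀ : ∑ x, w x ≠ 0 := by
    obtain ⟨x, hx⟩ := exists_ne_zero_of_sum_eq_one hP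
    exact fun h => hx ((ENNReal.rpow_eq_zero_iff_of_pos hβ).1 (sum_eq_zero_iff.1 h x (mem_univ x)))
  have hT_top : ∑ x, w x ≠ ⊤ := ENNReal.sum_ne_top.2 fun x _ => hw_top x
  have hS : ∀ b : X → ℝ≥0∞,
      ∑ x, P x ^ α * b x ^ (2 * (1 - α)) = ∑ x, w x ^ s * b x ^ (1 - s) := fun b =>
    sum_congr rfl fun x _ => by
      rw [← ENNReal.rpow_mul, div_mul_cancel₀ _ hs.ne', show 2 * (1 - α) = 1 - s by ring]
  set Q := PMFon.normalize w hT₀ hT_top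
  have hopt : ∑ x, P x ^ α * geomMean Q.1 Q.1 x ^ (2 * (1 - α)) = (∑ x, w x) ^ s := by
    rw [geomMean_self, hS]
    exact ENNReal.sum_rpow_mul_div_sum_rpow s hw_top hT₀ hT_top
  rw [renyiEnt_div_two_mul_sub_one hα hα₁, ← hopt, Jalpha]
  simp_rw [renyiDiv_diagJoint (by linarith) hα₁]
  rcases hα₁.lt_or_gt with hlt | hgt
  · refine iInf_coe_mul_log_eq_of_ge (inv_nonpos.2 (by linarith)) (Q, Q) fun Q' => ?_
    rw [hopt, hS]
    exact ENNReal.sum_rpow_mul_rpow_le_of_sum_le_one hs.le (by linarith) w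
      (sum_geomMean_le_one Q'.1.2 Q'.2.2)
  · refine iInf_coe_mul_log_eq_of_le (inv_nonneg.2 (by linarith)) (Q, Q) fun Q' => ?_
    rw [hopt, hS]
    exact ENNReal.rpow_sum_le_sum_rpow_mul_rpow_of_sum_le_one (by linarith) hw_top
      (sum_geomMean_le_one Q'.1.2 Q'.2.2)

theorem Jalpha_diagJoint_of_le_half {P : X → ℝ≥0∞} (hP : ∑ x, P x = 1) {α : ℝ} (hα₀ : 0 < α)
    (hα : α ≤ 1 / 2) : Jalpha α (diagJoint P) = ((α / (1 - α) : ℝ) : EReal) * minEnt P := by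
  obtain ⟨x₁, -⟩ := exists_ne_zero_of_sum_eq_one hP
  have : Nonempty X := ⟨x₁⟩
  obtain ⟨x₀, hx₀⟩ := Finite.exists_max P
  have hM : ⨆ x, P x = P x₀ := le_antisymm (iSup_le hx₀) (le_iSup P x₀)
  set δ := PMFon.dirac x₀
  have hopt : ∑ x, P x ^ α * geomMean δ.1 δ.1 x ^ (2 * (1 - α)) = (⨆ x, P x) ^ α := by
    rw [geomMean_self, hM, Fintype.sum_eq_single x₀ fun x hx => by
      simp [δ, PMFon.dirac, hx, ENNReal.zero_rpow_of_pos (by linarith : (0 : ℝ) < 2 * (1 - α))]]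
    simp [δ, PMFon.dirac]
  rw [coe_div_one_sub_mul_minEnt, ← hopt, Jalpha]
  simp_rw [renyiDiv_diagJoint hα₀ (by linarith : α ≠ 1)]
  refine iInf_coe_mul_log_eq_of_ge (inv_nonpos.2 (by linarith)) (δ, δ) fun Q => ?_
  rw [hopt]
  exact ENNReal.sum_rpow_mul_rpow_le_iSup_rpow hα₀.le (by linarith) P
    (sum_geomMean_le_one Q.1.2 Q.2.2)

end Finite

/-- `J_α(X;X) = H_{α/(2α-1)}(X)` for `α > 1/2` and
`J_α(X;X) = (α/(1-α)) H_∞(X)` for `α ∈ (0, 1/2]`. -/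
theorem stmt14 {X : Type*} [Fintype X] [DecidableEq X] (P : X → ℝ≥0∞) (hP : ∑ x, P x = 1) (α : ℝ) :
    (1/2 < α →
      Jalpha α (fun p : X × X => if p.1 = p.2 then P p.1 else 0) =
        renyiEnt (α / (2*α - 1)) P) ∧
    (0 < α → α ≤ 1/2 →
      Jalpha α (fun p : X × X => if p.1 = p.2 then P p.1 else 0) =
        ((α / (1 - α) : ℝ) : EReal) * minEnt P) := by
  refine ⟨fun hα => ?_, fun hα₀ hα => Jalpha_diagJoint_of_le_half hP hα₀ hα⟩
  rcases eq_or_ne α 1 with rfl | hα₁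
  · rw [show (1 : ℝ) / (2 * 1 - 1) = 1 by norm_num]
    exact Jalpha_one_diagJoint hP
  · exact Jalpha_diagJoint_of_half_lt hP hα hα₁
end

section
/- For α ≥ 1/2, the map (Q_X, Q_Y) ↦ D_α(P_XY||Q_X Q_Y) is jointly convex in the pair (Q_X, Q_Y): for λ ∈ (0,1), D_α(P_XY||(λQ_{X1}+(1−λ)Q_{X2})(λQ_{Y1}+(1−λ)Q_{Y2})) ≤ λ D_α(P_XY||Q_{X1}Q_{Y1}) + (1−λ) D_α(P_XY||Q_{X2}Q_{Y2}). -/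
open scoped ENNReal BigOperators
open Finset

/-!
Write `Q₁ = Q_{X1} Q_{Y1}`, `Q₂ = Q_{X2} Q_{Y2}` and `Q` for the product of the two mixtures.
Weighted AM–GM in each factor gives `Q₁ ^ λ * Q₂ ^ (1 - λ) ≤ Q` pointwise. For `α = 1` this is all
that is needed, by concavity of `log`; for `α > 1` the map `q ↦ q ^ (1 - α)` is decreasing, so by
Hölder `∑ P ^ α Q ^ (1 - α)` is at most the weighted geometric mean of the two sums for `Q₁, Q₂`.
For `1/2 ≤ α < 1` put `p = 1 - α ≤ 1/2`: the map `(a, b) ↦ (a b) ^ p` is jointly concave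
(concavity of `z ↦ z ^ (2p)` plus Cauchy–Schwarz), so `λ Q₁ ^ p + (1 - λ) Q₂ ^ p ≤ Q ^ p`
pointwise; summing and AM–GM bound the geometric mean of the sums by the sum for `Q`, and the
negative factor `(α - 1)⁻¹` turns this into the claim.
-/

lemma ENNReal.ne_top_of_sum_eq_one {ι : Type*} [Fintype ι] {f : ι → ℝ≥0∞} (h : ∑ i, f i = 1)
    (i : ι) : f i ≠ ⊤ :=
  ENNReal.sum_ne_top.1 (h ▸ ENNReal.one_ne_top) i (mem_univ i)

lemma Real.concaveOn_mul_rpow {p : ℝ} (hp₀ : 0 ≤ p) (hp : p ≤ 1 / 2) :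
    ConcaveOn ℝ (Set.Ici 0 ×ˢ Set.Ici 0) fun x : ℝ × ℝ => (x.1 * x.2) ^ p := by
  refine ⟨(convex_Ici 0).prod (convex_Ici 0), ?_⟩
  rintro ⟨a₁, b₁⟩ ⟨ha₁, hb₁⟩ ⟨a₂, b₂⟩ ⟨ha₂, hb₂⟩ w₁ w₂ hw₁ hw₂ hw
  simp only [Set.mem_Ici] at ha₁ hb₁ ha₂ hb₂
  simp only [Prod.smul_mk, Prod.mk_add_mk, smul_eq_mul]
  have hsqrt (a b : ℝ) (ha : 0 ≤ a) (hb : 0 ≤ b) : (a * b) ^ p = (√a * √b) ^ (2 * p) := by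
    rw [Real.rpow_mul (by positivity), ← Real.sqrt_mul ha, Real.rpow_two,
      Real.sq_sqrt (by positivity)]
  -- Cauchy–Schwarz for the vectors `(√(w₁ a₁), √(w₂ a₂))` and `(√(w₁ b₁), √(w₂ b₂))`
  have cauchy_schwarz : (w₁ * (√a₁ * √b₁) + w₂ * (√a₂ * √b₂)) ^ 2 ≤
      (w₁ * a₁ + w₂ * a₂) * (w₁ * b₁ + w₂ * b₂) := by
    conv_rhs => rw [← Real.sq_sqrt ha₁, ← Real.sq_sqrt hb₁, ← Real.sq_sqrt ha₂, ← Real.sq_sqrt hb₂]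
    nlinarith [mul_nonneg (mul_nonneg hw₁ hw₂) (sq_nonneg (√a₁ * √b₂ - √a₂ * √b₁))]
  calc w₁ * (a₁ * b₁) ^ p + w₂ * (a₂ * b₂) ^ p
      = w₁ * (√a₁ * √b₁) ^ (2 * p) + w₂ * (√a₂ * √b₂) ^ (2 * p) := by
        rw [hsqrt _ _ ha₁ hb₁, hsqrt _ _ ha₂ hb₂]
    _ ≤ (w₁ * (√a₁ * √b₁) + w₂ * (√a₂ * √b₂)) ^ (2 * p) :=
        (Real.concaveOn_rpow (by positivity) (by linarith)).2
          (Set.mem_Ici.2 (by positivity)) (Set.mem_Ici.2 (by positivity)) hw₁ hw₂ hw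
    _ = ((w₁ * (√a₁ * √b₁) + w₂ * (√a₂ * √b₂)) ^ 2) ^ p := by
        rw [Real.rpow_mul (by positivity), Real.rpow_two]
    _ ≤ ((w₁ * a₁ + w₂ * a₂) * (w₁ * b₁ + w₂ * b₂)) ^ p :=
        Real.rpow_le_rpow (sq_nonneg _) cauchy_schwarz hp₀

namespace ENNReal

variable {c w₁ w₂ : ℝ}

lemma rpow_le_rpow_of_nonpos {x y : ℝ≥0∞} {z : ℝ} (hxy : x ≤ y) (hz : z ≤ 0) : y ^ z ≤ x ^ z := by
  rw [← neg_neg z, rpow_neg y, rpow_neg x]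
  exact ENNReal.inv_le_inv.2 (rpow_le_rpow hxy (neg_nonneg.2 hz))

lemma geom_mean_le_arith_mean2_weighted {a b : ℝ≥0∞} (hw₁ : 0 ≤ w₁) (hw₂ : 0 ≤ w₂)
    (hw : w₁ + w₂ = 1) (ha : a ≠ ⊤) (hb : b ≠ ⊤) :
    a ^ w₁ * b ^ w₂ ≤ ENNReal.ofReal w₁ * a + ENNReal.ofReal w₂ * b := by
  rw [← ofReal_toReal ha, ← ofReal_toReal hb]
  simp (disch := positivity) only [ofReal_rpow_of_nonneg, ← ofReal_mul, ← ofReal_add]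
  exact ofReal_le_ofReal
    (Real.geom_mean_le_arith_mean2_weighted hw₁ hw₂ toReal_nonneg toReal_nonneg hw)

lemma geom_mean_mul_le_arith_mean_mul {a₁ a₂ b₁ b₂ : ℝ≥0∞} (hw₁ : 0 ≤ w₁) (hw₂ : 0 ≤ w₂)
    (hw : w₁ + w₂ = 1) (ha₁ : a₁ ≠ ⊤) (ha₂ : a₂ ≠ ⊤) (hb₁ : b₁ ≠ ⊤) (hb₂ : b₂ ≠ ⊤) :
    (a₁ * b₁) ^ w₁ * (a₂ * b₂) ^ w₂ ≤
      (ENNReal.ofReal w₁ * a₁ + ENNReal.ofReal w₂ * a₂) *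
        (ENNReal.ofReal w₁ * b₁ + ENNReal.ofReal w₂ * b₂) :=
  calc (a₁ * b₁) ^ w₁ * (a₂ * b₂) ^ w₂ = (a₁ ^ w₁ * a₂ ^ w₂) * (b₁ ^ w₁ * b₂ ^ w₂) := by
        rw [mul_rpow_of_nonneg _ _ hw₁, mul_rpow_of_nonneg _ _ hw₂]; ring
    _ ≤ _ := mul_le_mul' (geom_mean_le_arith_mean2_weighted hw₁ hw₂ hw ha₁ ha₂)
        (geom_mean_le_arith_mean2_weighted hw₁ hw₂ hw hb₁ hb₂)

lemma arith_mean_mul_rpow_le {a₁ a₂ b₁ b₂ : ℝ≥0∞} {p : ℝ} (hp₀ : 0 ≤ p) (hp : p ≤ 1 / 2)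
    (hw₁ : 0 ≤ w₁) (hw₂ : 0 ≤ w₂) (hw : w₁ + w₂ = 1)
    (ha₁ : a₁ ≠ ⊤) (ha₂ : a₂ ≠ ⊤) (hb₁ : b₁ ≠ ⊤) (hb₂ : b₂ ≠ ⊤) :
    ENNReal.ofReal w₁ * (a₁ * b₁) ^ p + ENNReal.ofReal w₂ * (a₂ * b₂) ^ p ≤
      ((ENNReal.ofReal w₁ * a₁ + ENNReal.ofReal w₂ * a₂) *
        (ENNReal.ofReal w₁ * b₁ + ENNReal.ofReal w₂ * b₂)) ^ p := by
  rw [← ofReal_toReal ha₁, ← ofReal_toReal ha₂, ← ofReal_toReal hb₁, ← ofReal_toReal hb₂]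
  simp (disch := positivity) only [← ofReal_mul, ofReal_rpow_of_nonneg, ← ofReal_add]
  exact ofReal_le_ofReal <| (Real.concaveOn_mul_rpow hp₀ hp).2
    (x := (a₁.toReal, b₁.toReal)) ⟨toReal_nonneg, toReal_nonneg⟩
    (y := (a₂.toReal, b₂.toReal)) ⟨toReal_nonneg, toReal_nonneg⟩ hw₁ hw₂ hw

lemma sum_rpow_mul_rpow_le_s15 {ι : Type*} (s : Finset ι) (f g : ι → ℝ≥0∞) (hw₁ : 0 < w₁)
    (hw₂ : 0 < w₂) (hw : w₁ + w₂ = 1) :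
    ∑ i ∈ s, f i ^ w₁ * g i ^ w₂ ≤ (∑ i ∈ s, f i) ^ w₁ * (∑ i ∈ s, g i) ^ w₂ := by
  simpa only [← rpow_mul, one_div_one_div, mul_one_div_cancel hw₁.ne',
    mul_one_div_cancel hw₂.ne', rpow_one] using
    inner_le_Lp_mul_Lq s (fun i => f i ^ w₁) (fun i => g i ^ w₂)
      (Real.holderConjugate_one_div hw₁ hw₂ hw)

variable {S S₁ S₂ : ℝ≥0∞}

lemma coe_mul_log_le_of_le_rpow_mul_rpow (hc : 0 ≤ c) (h : S ≤ S₁ ^ w₁ * S₂ ^ w₂) :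
    (c : EReal) * log S ≤ w₁ * (c * log S₁) + w₂ * (c * log S₂) :=
  calc (c : EReal) * log S ≤ c * log (S₁ ^ w₁ * S₂ ^ w₂) :=
        mul_le_mul_of_nonneg_left (log_le_log h) (EReal.coe_nonneg.2 hc)
    _ = c * (w₁ * log S₁ + w₂ * log S₂) := by rw [log_mul_add, log_rpow, log_rpow]
    _ = w₁ * (c * log S₁) + w₂ * (c * log S₂) := by
        rw [EReal.left_distrib_of_nonneg_of_ne_top (EReal.coe_nonneg.2 hc) (EReal.coe_ne_top c),
          mul_left_comm, mul_left_comm (c : EReal)]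

lemma coe_mul_log_le_of_rpow_mul_rpow_le (hc : c ≤ 0) (hw₁ : 0 ≤ w₁) (hw₂ : 0 ≤ w₂)
    (hS₁ : S₁ ≠ ⊤) (hS₂ : S₂ ≠ ⊤) (h : S₁ ^ w₁ * S₂ ^ w₂ ≤ S) :
    (c : EReal) * log S ≤ w₁ * (c * log S₁) + w₂ * (c * log S₂) := by
  have neg_inv (T : ℝ≥0∞) : (c : EReal) * log T = ((-c : ℝ) : EReal) * log T⁻¹ := by
    rw [log_inv, EReal.coe_neg, neg_mul_neg]
  simp only [neg_inv]
  refine coe_mul_log_le_of_le_rpow_mul_rpow (neg_nonneg.2 hc) ?_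
  rw [inv_rpow, inv_rpow, ← ENNReal.mul_inv (.inr (rpow_ne_top_of_nonneg hw₂ hS₂))
    (.inl (rpow_ne_top_of_nonneg hw₁ hS₁))]
  exact ENNReal.inv_le_inv.2 h

end ENNReal

section Divergence

open ENNReal

variable {ι : Type*} [Fintype ι] {P Q Q₁ Q₂ : ι → ℝ≥0∞} {α w₁ w₂ : ℝ}

theorem renyiDiv_le_of_geom_mean_le (hα : 1 < α) (hw₁ : 0 < w₁) (hw₂ : 0 < w₂)
    (hw : w₁ + w₂ = 1) (hQ₁ : ∀ i, Q₁ i ≠ ⊤) (hQ₂ : ∀ i, Q₂ i ≠ ⊤)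
    (hQ : ∀ i, Q₁ i ^ w₁ * Q₂ i ^ w₂ ≤ Q i) :
    renyiDiv α P Q ≤ w₁ * renyiDiv α P Q₁ + w₂ * renyiDiv α P Q₂ := by
  simp only [renyiDiv, hα.ne', if_false]
  refine coe_mul_log_le_of_le_rpow_mul_rpow (inv_nonneg.2 (sub_nonneg.2 hα.le)) ?_
  refine le_trans (sum_le_sum fun i _ => ?_) (sum_rpow_mul_rpow_le_s15 _ _ _ hw₁ hw₂ hw)
  calc P i ^ α * Q i ^ (1 - α) ≤ P i ^ α * (Q₁ i ^ w₁ * Q₂ i ^ w₂) ^ (1 - α) :=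
        mul_le_mul_right (rpow_le_rpow_of_nonpos (hQ i) (by linarith)) _
    _ = (P i ^ α) ^ (w₁ + w₂) * ((Q₁ i ^ (1 - α)) ^ w₁ * (Q₂ i ^ (1 - α)) ^ w₂) := by
        rw [hw, rpow_one, mul_rpow_of_ne_top (rpow_ne_top_of_nonneg hw₁.le (hQ₁ i))
          (rpow_ne_top_of_nonneg hw₂.le (hQ₂ i)), ← rpow_mul, ← rpow_mul, ← rpow_mul, ← rpow_mul,
          mul_comm w₁, mul_comm w₂]
    _ = (P i ^ α * Q₁ i ^ (1 - α)) ^ w₁ * (P i ^ α * Q₂ i ^ (1 - α)) ^ w₂ := by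
        rw [rpow_add_of_nonneg _ _ hw₁.le hw₂.le, mul_rpow_of_nonneg _ _ hw₁.le,
          mul_rpow_of_nonneg _ _ hw₂.le]
        ring

theorem renyiDiv_le_of_arith_mean_rpow_le (hα₀ : 0 ≤ α) (hα : α < 1) (hw₁ : 0 ≤ w₁)
    (hw₂ : 0 ≤ w₂) (hw : w₁ + w₂ = 1) (hP : ∀ i, P i ≠ ⊤) (hQ₁ : ∀ i, Q₁ i ≠ ⊤)
    (hQ₂ : ∀ i, Q₂ i ≠ ⊤)
    (hQ : ∀ i, ENNReal.ofReal w₁ * Q₁ i ^ (1 - α) + ENNReal.ofReal w₂ * Q₂ i ^ (1 - α) ≤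
      Q i ^ (1 - α)) :
    renyiDiv α P Q ≤ w₁ * renyiDiv α P Q₁ + w₂ * renyiDiv α P Q₂ := by
  simp only [renyiDiv, hα.ne, if_false]
  have hS {Q' : ι → ℝ≥0∞} (hQ' : ∀ i, Q' i ≠ ⊤) : ∑ i, P i ^ α * Q' i ^ (1 - α) ≠ ⊤ :=
    sum_ne_top.2 fun i _ => mul_ne_top (rpow_ne_top_of_nonneg hα₀ (hP i))
      (rpow_ne_top_of_nonneg (by linarith) (hQ' i))
  refine coe_mul_log_le_of_rpow_mul_rpow_le (inv_nonpos.2 (by linarith)) hw₁ hw₂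
    (hS hQ₁) (hS hQ₂) ?_
  calc (∑ i, P i ^ α * Q₁ i ^ (1 - α)) ^ w₁ * (∑ i, P i ^ α * Q₂ i ^ (1 - α)) ^ w₂
      ≤ ENNReal.ofReal w₁ * ∑ i, P i ^ α * Q₁ i ^ (1 - α) +
          ENNReal.ofReal w₂ * ∑ i, P i ^ α * Q₂ i ^ (1 - α) :=
        geom_mean_le_arith_mean2_weighted hw₁ hw₂ hw (hS hQ₁) (hS hQ₂)
    _ = ∑ i, P i ^ α *
          (ENNReal.ofReal w₁ * Q₁ i ^ (1 - α) + ENNReal.ofReal w₂ * Q₂ i ^ (1 - α)) := by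
        rw [mul_sum, mul_sum, ← sum_add_distrib]
        exact sum_congr rfl fun i _ => by ring
    _ ≤ ∑ i, P i ^ α * Q i ^ (1 - α) := by gcongr with i; exact hQ i

lemma coe_mul_klDiv_ne_bot {w : ℝ} (hw : 0 ≤ w) (P Q : ι → ℝ≥0∞) :
    (w : EReal) * klDiv P Q ≠ ⊥ := by
  refine (EReal.mul_ne_bot _ _).2 ⟨.inl (EReal.coe_ne_bot w), .inr ?_,
    .inl (EReal.coe_ne_top w), .inl (EReal.coe_nonneg.2 hw)⟩
  unfold klDiv
  split_ifs <;> simp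

theorem klDiv_le_of_geom_mean_le (hw₁ : 0 < w₁) (hw₂ : 0 < w₂) (hw : w₁ + w₂ = 1)
    (hQ₁ : ∀ i, Q₁ i ≠ ⊤) (hQ₂ : ∀ i, Q₂ i ≠ ⊤) (hQ_top : ∀ i, Q i ≠ ⊤)
    (hQ : ∀ i, Q₁ i ^ w₁ * Q₂ i ^ w₂ ≤ Q i) :
    klDiv P Q ≤ w₁ * klDiv P Q₁ + w₂ * klDiv P Q₂ := by
  by_cases hac₁ : ∀ i, Q₁ i = 0 → P i = 0
  swap
  · rw [show klDiv P Q₁ = ⊤ from if_neg hac₁, EReal.coe_mul_top_of_pos hw₁,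
      EReal.top_add_of_ne_bot (coe_mul_klDiv_ne_bot hw₂.le _ _)]
    exact le_top
  by_cases hac₂ : ∀ i, Q₂ i = 0 → P i = 0
  swap
  · rw [show klDiv P Q₂ = ⊤ from if_neg hac₂, EReal.coe_mul_top_of_pos hw₂,
      EReal.add_top_of_ne_bot (coe_mul_klDiv_ne_bot hw₁.le _ _)]
    exact le_top
  have hac (i) (hi : Q i = 0) : P i = 0 := by
    have := hQ i
    rw [hi, nonpos_iff_eq_zero, mul_eq_zero, rpow_eq_zero_iff_of_pos hw₁,
      rpow_eq_zero_iff_of_pos hw₂] at this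
    exact this.elim (hac₁ i) (hac₂ i)
  simp only [klDiv, if_pos hac, if_pos hac₁, if_pos hac₂]
  norm_cast
  rw [mul_sum, mul_sum, ← sum_add_distrib]
  refine sum_le_sum fun i _ => ?_
  rcases (toReal_nonneg : 0 ≤ (P i).toReal).eq_or_lt with hP | hP
  · simp [← hP]
  have hP₀ : P i ≠ 0 := (toReal_pos_iff.1 hP).1.ne'
  have q₁ : 0 < (Q₁ i).toReal := toReal_pos (mt (hac₁ i) hP₀) (hQ₁ i)
  have q₂ : 0 < (Q₂ i).toReal := toReal_pos (mt (hac₂ i) hP₀) (hQ₂ i)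
  have q : 0 < (Q i).toReal := toReal_pos (mt (hac i) hP₀) (hQ_top i)
  have hlog : w₁ * Real.log (Q₁ i).toReal + w₂ * Real.log (Q₂ i).toReal ≤
      Real.log (Q i).toReal := by
    rw [← Real.log_rpow q₁, ← Real.log_rpow q₂, ← Real.log_mul (by positivity) (by positivity)]
    refine Real.log_le_log (by positivity) ?_
    simpa only [toReal_mul, toReal_rpow] using toReal_mono (hQ_top i) (hQ i)
  rw [Real.log_div hP.ne' q.ne', Real.log_div hP.ne' q₁.ne', Real.log_div hP.ne' q₂.ne']
  obtain rfl : w₂ = 1 - w₁ := by linarith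
  linarith [mul_le_mul_of_nonneg_left hlog hP.le]

end Divergence

/-- for `α ≥ 1/2`, `(Q_X, Q_Y) ↦ D_α(P_XY‖Q_X Q_Y)` is jointly convex. -/
theorem stmt15 {X Y : Type*} [Fintype X] [Fintype Y] (P : X × Y → ℝ≥0∞)
    (hP : ∑ p, P p = 1) (α : ℝ) (hα : 1/2 ≤ α)
    (QX1 QX2 : X → ℝ≥0∞) (hQX1 : ∑ x, QX1 x = 1) (hQX2 : ∑ x, QX2 x = 1)
    (QY1 QY2 : Y → ℝ≥0∞) (hQY1 : ∑ y, QY1 y = 1) (hQY2 : ∑ y, QY2 y = 1)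
    (l : ℝ) (hl0 : 0 < l) (hl1 : l < 1) :
    renyiDiv α P (fun p =>
        (ENNReal.ofReal l * QX1 p.1 + ENNReal.ofReal (1 - l) * QX2 p.1) *
        (ENNReal.ofReal l * QY1 p.2 + ENNReal.ofReal (1 - l) * QY2 p.2)) ≤
      ((l : ℝ) : EReal) * renyiDiv α P (fun p => QX1 p.1 * QY1 p.2) +
        ((1 - l : ℝ) : EReal) * renyiDiv α P (fun p => QX2 p.1 * QY2 p.2) := by
  have hw : l + (1 - l) = 1 := by ring
  have hl : 0 < 1 - l := sub_pos.2 hl1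
  have hX₁ := ENNReal.ne_top_of_sum_eq_one hQX1
  have hX₂ := ENNReal.ne_top_of_sum_eq_one hQX2
  have hY₁ := ENNReal.ne_top_of_sum_eq_one hQY1
  have hY₂ := ENNReal.ne_top_of_sum_eq_one hQY2
  have hQ₁ (p : X × Y) : QX1 p.1 * QY1 p.2 ≠ ⊤ := ENNReal.mul_ne_top (hX₁ p.1) (hY₁ p.2)
  have hQ₂ (p : X × Y) : QX2 p.1 * QY2 p.2 ≠ ⊤ := ENNReal.mul_ne_top (hX₂ p.1) (hY₂ p.2)
  have hgeo (p : X × Y) := ENNReal.geom_mean_mul_le_arith_mean_mul hl0.le hl.le hw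
    (hX₁ p.1) (hX₂ p.1) (hY₁ p.2) (hY₂ p.2)
  rcases lt_trichotomy α 1 with hα1 | rfl | hα1
  · exact renyiDiv_le_of_arith_mean_rpow_le (by linarith) hα1 hl0.le hl.le hw
      (ENNReal.ne_top_of_sum_eq_one hP) hQ₁ hQ₂ fun p => ENNReal.arith_mean_mul_rpow_le
        (by linarith) (by linarith) hl0.le hl.le hw (hX₁ p.1) (hX₂ p.1) (hY₁ p.2) (hY₂ p.2)
  · simp only [renyiDiv, if_true]
    exact klDiv_le_of_geom_mean_le hl0 hl hw hQ₁ hQ₂ (fun p => ENNReal.mul_ne_top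
      (by finiteness [hX₁ p.1, hX₂ p.1]) (by finiteness [hY₁ p.2, hY₂ p.2])) hgeo
  · exact renyiDiv_le_of_geom_mean_le hα1 hl0 hl hw hQ₁ hQ₂ hgeo
end

section
/- For α ∈ (0,1/2] and any PMF Q, Σ_x P_X(x) Q(x)^{(1−α)/α} ≤ max_x P_X(x), with equality achievable by the point mass at a maximizer of P_X. Consequently min_Q (α/(α−1)) log Σ_x P_X(x) Q(x)^{(1−α)/α} = (α/(1−α)) H_∞(X) for α ∈ (0,1/2]. -/
open scoped ENNReal BigOperators
open Finset

/-- for `α ∈ (0, 1/2]`, `∑ P(x) Q(x)^{(1-α)/α} ≤ max_x P(x)` with equality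
achieved by a point mass at a maximizer, and consequently
`min_Q (α/(α-1)) log ∑ P(x) Q(x)^{(1-α)/α} = (α/(1-α)) H_∞(X)`. -/
theorem stmt17 {X : Type*} [Fintype X] (P : X → ℝ≥0∞) (hP : ∑ x, P x = 1)
    (α : ℝ) (hα0 : 0 < α) (hα : α ≤ 1/2) :
    (∀ Q : X → ℝ≥0∞, ∑ x, Q x = 1 →
      ∑ x, P x * Q x ^ ((1 - α)/α) ≤ ⨆ x, P x) ∧
    (∃ Q : X → ℝ≥0∞, ∑ x, Q x = 1 ∧
      ∑ x, P x * Q x ^ ((1 - α)/α) = ⨆ x, P x) ∧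
    (⨅ Q : PMFon X,
        ((α / (α - 1) : ℝ) : EReal) * ENNReal.log (∑ x, P x * Q.1 x ^ ((1 - α)/α))) =
      ((α / (1 - α) : ℝ) : EReal) * minEnt P := by
    classical
  have he1 : (1 : ℝ) ≤ (1 - α)/α := by rw [le_div_iff₀ hα0]; linarith
  have he0 : (0 : ℝ) < (1 - α)/α := lt_of_lt_of_le one_pos he1
  -- Part 1
  have part1 : ∀ Q : X → ℝ≥0∞, ∑ x, Q x = 1 →
      ∑ x, P x * Q x ^ ((1 - α)/α) ≤ ⨆ x, P x := by
    intro Q hQ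
    calc ∑ x, P x * Q x ^ ((1 - α)/α)
        ≤ ∑ x, (⨆ y, P y) * Q x := by
          refine Finset.sum_le_sum fun x _ => mul_le_mul' (le_iSup P x) ?_
          have hQx : Q x ≤ 1 :=
            hQ ▸ Finset.single_le_sum (f := Q) (fun i _ => zero_le) (Finset.mem_univ x)
          calc Q x ^ ((1 - α)/α) ≤ Q x ^ (1:ℝ) :=
                ENNReal.rpow_le_rpow_of_exponent_ge hQx he1
            _ = Q x := ENNReal.rpow_one _
      _ = ⨆ y, P y := by rw [← Finset.mul_sum, hQ, mul_one]
  -- maximizer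
  have hne : Nonempty X := by
    by_contra h
    simp [not_nonempty_iff.mp h] at hP
  obtain ⟨x₀, hx₀⟩ := Finite.exists_max P
  have hsup : (⨆ x, P x) = P x₀ := le_antisymm (iSup_le hx₀) (le_iSup P x₀)
  set Q₀ : X → ℝ≥0∞ := fun x => if x = x₀ then 1 else 0 with hQ₀def
  have hQ₀ : ∑ x, Q₀ x = 1 := by simp [hQ₀def]
  have hQ₀sum : ∑ x, P x * Q₀ x ^ ((1 - α)/α) = ⨆ x, P x := by
    have : ∀ x, P x * Q₀ x ^ ((1 - α)/α) = if x = x₀ then P x₀ else 0 := by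
      intro x
      by_cases h : x = x₀ <;>
        simp [hQ₀def, h, ENNReal.zero_rpow_of_pos he0]
    rw [hsup]
    simp [this]
  refine ⟨part1, ⟨Q₀, hQ₀, hQ₀sum⟩, ?_⟩
  -- Part 3
  set c : ℝ := α / (α - 1) with hc
  have hcneg : c ≤ 0 := by
    rw [hc]
    apply div_nonpos_of_nonneg_of_nonpos hα0.le; linarith
  have hneg : α / (1 - α) = -c := by rw [hc, ← div_neg, neg_sub]
  set L : EReal := ENNReal.log (⨆ x, P x) with hL
  have hRHS : ((α / (1 - α) : ℝ) : EReal) * minEnt P = (c : EReal) * L := by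
    rw [hneg, minEnt, ← hL, EReal.coe_neg, neg_mul, mul_neg, neg_neg]
  rw [hRHS]
  apply le_antisymm
  · exact (iInf_le _ (⟨Q₀, hQ₀⟩ : PMFon X)).trans (by rw [hQ₀sum])
  · refine le_iInf fun Q => ?_
    have hlog : ENNReal.log (∑ x, P x * Q.1 x ^ ((1 - α)/α)) ≤ L :=
      ENNReal.log_monotone (part1 Q.1 Q.2)
    have h := mul_le_mul_of_nonneg_left hlog (by exact_mod_cast neg_nonneg.2 hcneg :
      (0:EReal) ≤ ((-c : ℝ) : EReal))
    rw [EReal.coe_neg, neg_mul, neg_mul, EReal.neg_le_neg_iff] at h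
    exact h
end

section
/- The sum K_α(X;Y) + H_α(X,Y) is nonincreasing in α: for 0 < α ≤ α', K_{α'}(X;Y) + H_{α'}(X,Y) ≤ K_α(X;Y) + H_α(X,Y). -/
open scoped ENNReal BigOperators
open Finset

/-!
Writing `t = 1 - 1/α`, the escort substitution `Q ↦ Q^α / ∑ Q^α` turns `Δ_α(P‖Q) + H_α(P)` into
`-log M_t(Q̃; P)`, the negative logarithm of the `P`-weighted power mean of order `t` of the escort
`Q̃`. Escorts of product PMFs are again product PMFs and every product PMF is one (take the escort
of order `1/α`), so `K_α + H_α` is the infimum of `-log M_{1-1/α}(Q̃; P)` over product PMFs `Q̃`.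
Power means are nondecreasing in their order (Jensen for positive orders, `log x ≤ x - 1` against
order `0`, and `M_{-t}(ρ) = 1 / M_t(1/ρ)` for negative orders), and `1 - 1/α` increases with `α`.
-/

open Real Set

section PowerMean

variable {ι : Type*} [Fintype ι] {w ρ : ι → ℝ}

noncomputable def logPowerMean (w ρ : ι → ℝ) (t : ℝ) : ℝ :=
  if t = 0 then ∑ i, w i * log (ρ i) else t⁻¹ * log (∑ i, w i * ρ i ^ t)

lemma sum_mul_rpow_pos (hw : ∀ i, 0 ≤ w i) (hw1 : ∑ i, w i = 1)
    (hρ : ∀ i, w i ≠ 0 → 0 < ρ i) (s : ℝ) : 0 < ∑ i, w i * ρ i ^ s := by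
  obtain ⟨i, -, hi⟩ := Finset.exists_ne_zero_of_sum_ne_zero (hw1 ▸ one_ne_zero)
  have hterm (j : ι) : 0 ≤ w j * ρ j ^ s := by
    rcases eq_or_ne (w j) 0 with h | h
    · simp [h]
    · exact mul_nonneg (hw j) (rpow_nonneg (hρ j h).le s)
  exact Finset.sum_pos' (fun j _ => hterm j)
    ⟨i, mem_univ i, mul_pos ((hw i).lt_of_ne' hi) (rpow_pos_of_pos (hρ i hi) s)⟩

lemma mul_sum_mul_log_le_log_sum_mul_rpow (hw : ∀ i, 0 ≤ w i) (hw1 : ∑ i, w i = 1)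
    (hρ : ∀ i, w i ≠ 0 → 0 < ρ i) (s : ℝ) :
    s * ∑ i, w i * log (ρ i) ≤ log (∑ i, w i * ρ i ^ s) := by
  set M := ∑ i, w i * ρ i ^ s
  have hM : 0 < M := sum_mul_rpow_pos hw hw1 hρ s
  -- average `log x ≤ x - 1` at `x = ρ i ^ s / M` against `w`
  have hterm (i : ι) : w i * (s * log (ρ i) - log M) ≤ w i * (ρ i ^ s / M - 1) := by
    rcases eq_or_ne (w i) 0 with h | h
    · simp [h]
    · refine mul_le_mul_of_nonneg_left ?_ (hw i)
      rw [← log_rpow (hρ i h), ← log_div (rpow_pos_of_pos (hρ i h) s).ne' hM.ne']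
      exact log_le_sub_one_of_pos (div_pos (rpow_pos_of_pos (hρ i h) s) hM)
  have hlhs : ∑ i, w i * (s * log (ρ i) - log M) = s * ∑ i, w i * log (ρ i) - log M := by
    simp only [mul_sub, Finset.sum_sub_distrib, ← Finset.sum_mul, hw1, one_mul, Finset.mul_sum]
    exact congrArg (· - log M) (Finset.sum_congr rfl fun i _ => by ring)
  have hrhs : ∑ i, w i * (ρ i ^ s / M - 1) = 0 := by
    simp only [mul_sub, Finset.sum_sub_distrib, hw1, mul_one, mul_div_assoc', ← Finset.sum_div]
    exact sub_eq_zero.2 (div_self hM.ne')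
  linarith [Finset.sum_le_sum fun i (_ : i ∈ Finset.univ) => hterm i]

lemma inv_mul_log_sum_mul_rpow_le (hw : ∀ i, 0 ≤ w i) (hw1 : ∑ i, w i = 1)
    (hρ : ∀ i, 0 ≤ ρ i) {a b : ℝ} (ha : 0 < a) (hab : a ≤ b)
    (hpos : 0 < ∑ i, w i * ρ i ^ a) :
    a⁻¹ * log (∑ i, w i * ρ i ^ a) ≤ b⁻¹ * log (∑ i, w i * ρ i ^ b) := by
  have hb : 0 < b := ha.trans_le hab
  have hjensen : (∑ i, w i * ρ i ^ a) ^ (b / a) ≤ ∑ i, w i * ρ i ^ b := by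
    convert rpow_arith_mean_le_arith_mean_rpow univ w (fun i => ρ i ^ a) (fun i _ => hw i) hw1
      (fun i _ => rpow_nonneg (hρ i) a) ((one_le_div ha).2 hab) using 3 with i
    rw [← rpow_mul (hρ i), mul_div_cancel₀ b ha.ne']
  have := log_le_log (rpow_pos_of_pos hpos _) hjensen
  rw [log_rpow hpos] at this
  calc a⁻¹ * log (∑ i, w i * ρ i ^ a) = b⁻¹ * (b / a * log (∑ i, w i * ρ i ^ a)) := by
        field_simp
    _ ≤ b⁻¹ * log (∑ i, w i * ρ i ^ b) := by gcongr

lemma logPowerMean_inv (hρ : ∀ i, 0 ≤ ρ i) (t : ℝ) :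
    logPowerMean w (fun i => (ρ i)⁻¹) t = -logPowerMean w ρ (-t) := by
  unfold logPowerMean
  split_ifs <;> simp_all [log_inv, inv_rpow (hρ _), ← rpow_neg (hρ _)]

lemma logPowerMean_monotoneOn_Ici (hw : ∀ i, 0 ≤ w i) (hw1 : ∑ i, w i = 1)
    (hρ : ∀ i, 0 ≤ ρ i) (hsupp : ∀ i, w i ≠ 0 → 0 < ρ i) :
    MonotoneOn (logPowerMean w ρ) (Ici 0) := by
  intro a ha b hb hab
  rcases (mem_Ici.1 ha).eq_or_lt with rfl | ha
  · rcases hab.eq_or_lt with rfl | hb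
    · rfl
    rw [logPowerMean, if_pos rfl, logPowerMean, if_neg hb.ne', le_inv_mul_iff₀ hb]
    exact mul_sum_mul_log_le_log_sum_mul_rpow hw hw1 hsupp b
  · rw [logPowerMean, if_neg ha.ne', logPowerMean, if_neg (ha.trans_le hab).ne']
    exact inv_mul_log_sum_mul_rpow_le hw hw1 hρ ha hab (sum_mul_rpow_pos hw hw1 hsupp a)

theorem logPowerMean_monotone (hw : ∀ i, 0 ≤ w i) (hw1 : ∑ i, w i = 1)
    (hρ : ∀ i, 0 ≤ ρ i) (hsupp : ∀ i, w i ≠ 0 → 0 < ρ i) :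
    Monotone (logPowerMean w ρ) := by
  have hIic : MonotoneOn (logPowerMean w ρ) (Iic 0) := by
    intro a ha b hb hab
    have := logPowerMean_monotoneOn_Ici hw hw1 (fun i => inv_nonneg.2 (hρ i))
      (fun i hi => inv_pos.2 (hsupp i hi)) (neg_nonneg.2 (mem_Iic.1 hb))
      (neg_nonneg.2 (mem_Iic.1 ha)) (neg_le_neg hab)
    rwa [logPowerMean_inv hρ, logPowerMean_inv hρ, neg_neg, neg_neg, neg_le_neg_iff] at this
  simpa using hIic.union_right (logPowerMean_monotoneOn_Ici hw hw1 hρ hsupp) isGreatest_Iic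
    isLeast_Ici

end PowerMean

lemma EReal.coe_mul_add_coe (a b : ℝ) (x : EReal) :
    (a : EReal) * (x + b) = a * x + (a * b : ℝ) := by
  induction x with
  | bot =>
    rcases lt_trichotomy a 0 with ha | rfl | ha
    · rw [EReal.bot_add, EReal.coe_mul_bot_of_neg ha, EReal.top_add_coe]
    · simp
    · rw [EReal.bot_add, EReal.coe_mul_bot_of_pos ha, EReal.bot_add]
  | coe x => norm_cast; ring
  | top =>
    rcases lt_trichotomy a 0 with ha | rfl | ha
    · rw [EReal.top_add_coe, EReal.coe_mul_top_of_neg ha, EReal.bot_add]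
    · simp
    · rw [EReal.top_add_coe, EReal.coe_mul_top_of_pos ha, EReal.top_add_coe]

lemma EReal.iInf_add_coe {ι : Sort*} (f : ι → EReal) (c : ℝ) :
    (⨅ i, f i) + c = ⨅ i, (f i + c) :=
  Monotone.map_iInf_of_continuousAt (f := (· + (c : EReal)))
    ((EReal.continuousAt_add (.inr (EReal.coe_ne_bot c)) (.inr (EReal.coe_ne_top c))).comp
      (continuous_id.prodMk continuous_const).continuousAt)
    (fun _ _ h => add_le_add_left h _) (EReal.top_add_coe c)

section NegLogPowerMean

variable {ι : Type*} [Fintype ι] {w r : ι → ℝ≥0∞} {t : ℝ}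

lemma ne_top_of_sum_eq_one_s18 (hw1 : ∑ i, w i = 1) (i : ι) : w i ≠ ⊤ :=
  ENNReal.sum_ne_top.1 (hw1 ▸ ENNReal.one_ne_top) i (mem_univ i)

lemma sum_toReal_eq_one_s18 (hw1 : ∑ i, w i = 1) : ∑ i, (w i).toReal = 1 := by
  rw [← ENNReal.toReal_sum fun i _ => ne_top_of_sum_eq_one_s18 hw1 i, hw1, ENNReal.toReal_one]

lemma toReal_sum_mul_rpow (hT : ∑ i, w i * r i ^ t ≠ ⊤) :
    (∑ i, w i * r i ^ t).toReal = ∑ i, (w i).toReal * (r i).toReal ^ t := by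
  simp only [ENNReal.toReal_sum fun i _ => ENNReal.sum_ne_top.1 hT i (mem_univ i),
    ENNReal.toReal_mul, ENNReal.toReal_rpow]

lemma sum_mul_rpow_eq_zero_iff (ht : 0 < t) :
    ∑ i, w i * r i ^ t = 0 ↔ ∀ i, w i = 0 ∨ r i = 0 := by
  simp [Finset.sum_eq_zero_iff, ENNReal.rpow_eq_zero_iff_of_pos ht]

/-- `-log` of the `w`-weighted power mean of order `t` of `r` (the geometric mean at `t = 0`),
with the value `⊤` where that mean vanishes. -/
noncomputable def negLogPowerMean (w r : ι → ℝ≥0∞) (t : ℝ) : EReal :=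
  if t = 0 then
    if ∀ i, r i = 0 → w i = 0 then ((-∑ i, (w i).toReal * log (r i).toReal : ℝ) : EReal) else ⊤
  else ((-t⁻¹ : ℝ) : EReal) * ENNReal.log (∑ i, w i * r i ^ t)

lemma negLogPowerMean_eq_coe_of_ne_zero (ht : t ≠ 0) (h0 : ∑ i, w i * r i ^ t ≠ 0)
    (hT : ∑ i, w i * r i ^ t ≠ ⊤) :
    negLogPowerMean w r t =
      (-logPowerMean (fun i => (w i).toReal) (fun i => (r i).toReal) t : ℝ) := by
  rw [negLogPowerMean, if_neg ht, logPowerMean, if_neg ht, ENNReal.log_pos_real h0 hT,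
    toReal_sum_mul_rpow hT, ← EReal.coe_mul, neg_mul]

lemma negLogPowerMean_eq_coe_of_support (hw1 : ∑ i, w i = 1) (hr : ∀ i, r i ≠ ⊤)
    (hsupp : ∀ i, r i = 0 → w i = 0) (t : ℝ) :
    negLogPowerMean w r t =
      (-logPowerMean (fun i => (w i).toReal) (fun i => (r i).toReal) t : ℝ) := by
  rcases eq_or_ne t 0 with rfl | ht
  · rw [negLogPowerMean, if_pos rfl, if_pos hsupp, logPowerMean, if_pos rfl]
  refine negLogPowerMean_eq_coe_of_ne_zero ht ?_ (ENNReal.sum_ne_top.2 fun i _ => ?_)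
  · obtain ⟨i, -, hi⟩ := Finset.exists_ne_zero_of_sum_ne_zero (hw1 ▸ one_ne_zero)
    have hri : r i ≠ 0 := fun h => hi (hsupp i h)
    refine fun h => hi ?_
    simpa [ENNReal.rpow_eq_zero_iff, hr i, hri] using
      Finset.sum_eq_zero_iff.1 h i (mem_univ i)
  · rcases eq_or_ne (w i) 0 with h | h
    · simp [h]
    · exact ENNReal.mul_ne_top (ne_top_of_sum_eq_one_s18 hw1 i)
        (ENNReal.rpow_ne_top_of_ne_zero (fun h' => h (hsupp i h')) (hr i))

lemma negLogPowerMean_eq_top_of_nonpos (ht : t ≤ 0) (hsupp : ¬ ∀ i, r i = 0 → w i = 0) :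
    negLogPowerMean w r t = ⊤ := by
  rcases ht.eq_or_lt with rfl | ht
  · rw [negLogPowerMean, if_pos rfl, if_neg hsupp]
  push Not at hsupp
  obtain ⟨i, hri, hwi⟩ := hsupp
  have hsum : ∑ i, w i * r i ^ t = ⊤ := ENNReal.sum_eq_top.2
    ⟨i, mem_univ i, by rw [hri, ENNReal.zero_rpow_of_neg ht, ENNReal.mul_top hwi]⟩
  rw [negLogPowerMean, if_neg ht.ne, hsum, ENNReal.log_top,
    EReal.coe_mul_top_of_pos (neg_pos.2 (inv_lt_zero.2 ht))]

theorem negLogPowerMean_antitone (hw1 : ∑ i, w i = 1) (hr : ∀ i, r i ≠ ⊤) :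
    Antitone (negLogPowerMean w r) := by
  intro t t' htt'
  rcases le_or_gt t 0 with ht | ht
  · by_cases hsupp : ∀ i, r i = 0 → w i = 0
    · rw [negLogPowerMean_eq_coe_of_support hw1 hr hsupp,
        negLogPowerMean_eq_coe_of_support hw1 hr hsupp, EReal.coe_le_coe_iff, neg_le_neg_iff]
      refine logPowerMean_monotone (fun _ => ENNReal.toReal_nonneg) (sum_toReal_eq_one_s18 hw1)
        (fun _ => ENNReal.toReal_nonneg) (fun i hi => ENNReal.toReal_pos ?_ (hr i)) htt'
      exact fun h => hi (by simp [hsupp i h])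
    · rw [negLogPowerMean_eq_top_of_nonpos ht hsupp]
      exact le_top
  have ht' := ht.trans_le htt'
  by_cases h0 : ∑ i, w i * r i ^ t = 0
  · have htop : negLogPowerMean w r t = ⊤ := by
      rw [negLogPowerMean, if_neg ht.ne', h0, ENNReal.log_zero,
        EReal.coe_mul_bot_of_neg (neg_neg_of_pos (inv_pos.2 ht))]
    exact htop ▸ le_top
  have hT (s : ℝ) (hs : 0 < s) : ∑ i, w i * r i ^ s ≠ ⊤ := ENNReal.sum_ne_top.2 fun i _ =>
    ENNReal.mul_ne_top (ne_top_of_sum_eq_one_s18 hw1 i) (ENNReal.rpow_ne_top_of_nonneg hs.le (hr i))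
  have h0' : ∑ i, w i * r i ^ t' ≠ 0 := by
    rwa [ne_eq, sum_mul_rpow_eq_zero_iff ht', ← sum_mul_rpow_eq_zero_iff ht]
  rw [negLogPowerMean_eq_coe_of_ne_zero ht.ne' h0 (hT t ht),
    negLogPowerMean_eq_coe_of_ne_zero ht'.ne' h0' (hT t' ht'), EReal.coe_le_coe_iff,
    neg_le_neg_iff, logPowerMean, if_neg ht.ne', logPowerMean, if_neg ht'.ne']
  refine inv_mul_log_sum_mul_rpow_le (fun _ => ENNReal.toReal_nonneg) (sum_toReal_eq_one_s18 hw1)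
    (fun _ => ENNReal.toReal_nonneg) ht htt' ?_
  rw [← toReal_sum_mul_rpow (hT t ht)]
  exact ENNReal.toReal_pos h0 (hT t ht)

lemma negLogPowerMean_div (hw1 : ∑ i, w i = 1) (hr : ∀ i, r i ≠ ⊤) {c : ℝ≥0∞} (hc0 : c ≠ 0)
    (hcT : c ≠ ⊤) (t : ℝ) :
    negLogPowerMean w (fun i => r i / c) t = negLogPowerMean w r t + ENNReal.log c := by
  rw [ENNReal.log_pos_real hc0 hcT]
  rcases eq_or_ne t 0 with rfl | ht
  · have hsupp_iff : (∀ i, r i / c = 0 → w i = 0) ↔ ∀ i, r i = 0 → w i = 0 := by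
      simp [ENNReal.div_eq_zero_iff, hcT]
    simp only [negLogPowerMean, if_true, hsupp_iff]
    split_ifs with hsupp
    · have hterm (i : ι) : (w i).toReal * log (r i / c).toReal
          = (w i).toReal * log (r i).toReal - (w i).toReal * log c.toReal := by
        rcases eq_or_ne (w i) 0 with h | h
        · simp [h]
        rw [ENNReal.toReal_div, log_div (ENNReal.toReal_ne_zero.2 ⟨fun h' => h (hsupp i h'), hr i⟩)
          (ENNReal.toReal_ne_zero.2 ⟨hc0, hcT⟩), mul_sub]
      rw [← EReal.coe_add, EReal.coe_eq_coe_iff]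
      simp only [hterm, Finset.sum_sub_distrib, ← Finset.sum_mul, sum_toReal_eq_one_s18 hw1, one_mul]
      ring
    · rfl
  have hsum : ∑ i, w i * (r i / c) ^ t = (∑ i, w i * r i ^ t) * (c ^ t)⁻¹ := by
    simp only [div_eq_mul_inv, ENNReal.mul_rpow_of_ne_top (hr _) (ENNReal.inv_ne_top.2 hc0),
      ENNReal.inv_rpow, Finset.sum_mul, mul_assoc]
  rw [negLogPowerMean, if_neg ht, negLogPowerMean, if_neg ht, hsum, ENNReal.log_mul_add,
    ENNReal.log_inv, ENNReal.log_rpow, ENNReal.log_pos_real hc0 hcT, ← EReal.coe_mul,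
    ← EReal.coe_neg, EReal.coe_mul_add_coe]
  congr 2
  field_simp

end NegLogPowerMean

section Escort

variable {ι : Type*} [Fintype ι] {q : ι → ℝ≥0∞} {β γ : ℝ}

noncomputable def escort (β : ℝ) (q : ι → ℝ≥0∞) : ι → ℝ≥0∞ :=
  fun i => q i ^ β / ∑ j, q j ^ β

lemma sum_rpow_ne_zero (hq : ∑ i, q i = 1) (β : ℝ) : ∑ i, q i ^ β ≠ 0 := by
  obtain ⟨i, -, hi⟩ := Finset.exists_ne_zero_of_sum_ne_zero (hq ▸ one_ne_zero)
  exact fun h => (ENNReal.rpow_pos (pos_iff_ne_zero.2 hi) (ne_top_of_sum_eq_one_s18 hq i)).ne'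
    (Finset.sum_eq_zero_iff.1 h i (mem_univ i))

lemma sum_rpow_ne_top (hq : ∑ i, q i = 1) (hβ : 0 ≤ β) : ∑ i, q i ^ β ≠ ⊤ :=
  ENNReal.sum_ne_top.2 fun i _ => ENNReal.rpow_ne_top_of_nonneg hβ (ne_top_of_sum_eq_one_s18 hq i)

lemma sum_escort (hq : ∑ i, q i = 1) (hβ : 0 ≤ β) : ∑ i, escort β q i = 1 := by
  simp only [escort, div_eq_mul_inv, ← Finset.sum_mul]
  exact ENNReal.mul_inv_cancel (sum_rpow_ne_zero hq β) (sum_rpow_ne_top hq hβ)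

lemma escort_one (hq : ∑ i, q i = 1) : escort 1 q = q := by
  ext i
  simp [escort, hq]

lemma escort_escort (hq : ∑ i, q i = 1) (hβ : 0 ≤ β) (hγ : 0 ≤ γ) :
    escort γ (escort β q) = escort (β * γ) q := by
  have hN := ENNReal.rpow_ne_top_of_nonneg hγ (sum_rpow_ne_top hq hβ)
  have hN0 : (∑ j, q j ^ β) ^ γ ≠ 0 := by
    simp [ENNReal.rpow_eq_zero_iff, sum_rpow_ne_zero hq β, sum_rpow_ne_top hq hβ]
  have hterm (j : ι) : escort β q j ^ γ = q j ^ (β * γ) * ((∑ k, q k ^ β) ^ γ)⁻¹ := by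
    rw [escort, ENNReal.div_rpow_of_nonneg _ _ hγ, ← ENNReal.rpow_mul, div_eq_mul_inv]
  ext i
  change escort β q i ^ γ / ∑ j, escort β q j ^ γ = q i ^ (β * γ) / ∑ j, q j ^ (β * γ)
  simp only [hterm, ← Finset.sum_mul]
  exact ENNReal.mul_div_mul_right _ _ (ENNReal.inv_ne_zero.2 hN) (ENNReal.inv_ne_top.2 hN0)

lemma escort_prod {X Y : Type*} [Fintype X] [Fintype Y] {qx : X → ℝ≥0∞} {qy : Y → ℝ≥0∞}
    (hqx : ∑ x, qx x = 1) (hβ : 0 ≤ β) :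
    escort β (fun p : X × Y => qx p.1 * qy p.2) = fun p => escort β qx p.1 * escort β qy p.2 := by
  ext p
  simp only [escort, ENNReal.mul_rpow_of_nonneg _ _ hβ, Fintype.sum_prod_type, ← Finset.mul_sum,
    ← Finset.sum_mul]
  exact ENNReal.mul_div_mul_comm (.inl (sum_rpow_ne_zero hqx β)) (.inl (sum_rpow_ne_top hqx hβ))

end Escort

noncomputable def PMFon.escort {X : Type*} [Fintype X] {β : ℝ} (hβ : 0 ≤ β) (q : PMFon X) :
    PMFon X :=
  ⟨_root_.escort β q.1, sum_escort q.2 hβ⟩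

lemma PMFon.escort_surjective {X : Type*} [Fintype X] {β : ℝ} (hβ : 0 < β) :
    Function.Surjective (PMFon.escort (X := X) hβ.le) := fun q =>
  ⟨PMFon.escort (inv_nonneg.2 hβ.le) q, Subtype.ext <| by
    simp only [PMFon.escort]
    rw [escort_escort q.2 (inv_nonneg.2 hβ.le) hβ.le, inv_mul_cancel₀ hβ.ne', escort_one q.2]⟩

section Identity

variable {ι : Type*} [Fintype ι] {P Q : ι → ℝ≥0∞} {α : ℝ}

lemma exists_renyiEnt_eq_coe (hP : ∑ i, P i = 1) (hα : 0 < α) : ∃ h : ℝ, renyiEnt α P = h := by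
  unfold renyiEnt
  split_ifs
  · exact ⟨_, rfl⟩
  · exact ⟨_, by rw [ENNReal.log_pos_real (sum_rpow_ne_zero hP α) (sum_rpow_ne_top hP hα.le),
      ← EReal.coe_mul]⟩

lemma klDiv_add_renyiEnt_one (hP : ∀ i, P i ≠ ⊤) (hQ : ∀ i, Q i ≠ ⊤) :
    klDiv P Q + renyiEnt 1 P = negLogPowerMean P Q 0 := by
  rw [renyiEnt, if_pos rfl, klDiv, negLogPowerMean, if_pos rfl]
  split_ifs with hsupp
  · rw [← EReal.coe_add, EReal.coe_eq_coe_iff, ← Finset.sum_add_distrib,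
      ← Finset.sum_neg_distrib]
    refine Finset.sum_congr rfl fun i _ => ?_
    rcases eq_or_ne (P i) 0 with h | h
    · simp [h]
    rw [log_div (ENNReal.toReal_ne_zero.2 ⟨h, hP i⟩)
      (ENNReal.toReal_ne_zero.2 ⟨fun h' => h (hsupp i h'), hQ i⟩), log_inv]
    ring
  · rfl

theorem relAlphaEnt_add_renyiEnt (hP : ∑ i, P i = 1) (hQ : ∑ i, Q i = 1) (hα : 0 < α) :
    relAlphaEnt α P Q + renyiEnt α P = negLogPowerMean P (escort α Q) (1 - α⁻¹) := by
  rcases eq_or_ne α 1 with rfl | hα1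
  · rw [escort_one hQ, inv_one, sub_self, relAlphaEnt, if_pos rfl,
      klDiv_add_renyiEnt_one (ne_top_of_sum_eq_one_s18 hP) (ne_top_of_sum_eq_one_s18 hQ)]
  have ht : 1 - α⁻¹ ≠ 0 := by
    rw [sub_ne_zero, ne_comm, inv_ne_one]
    exact hα1
  rw [relAlphaEnt, if_neg hα1, renyiEnt, if_neg hα1,
    ENNReal.log_pos_real (sum_rpow_ne_zero hP α) (sum_rpow_ne_top hP hα.le), ← EReal.coe_mul,
    EReal.sub_add_cancel]
  unfold escort
  rw [negLogPowerMean_div hP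
      (fun i => ENNReal.rpow_ne_top_of_nonneg hα.le (ne_top_of_sum_eq_one_s18 hQ i))
      (sum_rpow_ne_zero hQ α) (sum_rpow_ne_top hQ hα.le), negLogPowerMean, if_neg ht]
  congr 3
  · field_simp
    ring
  · refine Finset.sum_congr rfl fun i _ => ?_
    rw [← ENNReal.rpow_mul]
    congr 2
    field_simp

end Identity

theorem Kalpha_add_renyiEnt {X Y : Type*} [Fintype X] [Fintype Y] {P : X × Y → ℝ≥0∞}
    (hP : ∑ p, P p = 1) {α : ℝ} (hα : 0 < α) :
    Kalpha α P + renyiEnt α P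
      = ⨅ R : PMFon X × PMFon Y, negLogPowerMean P (fun p => R.1.1 p.1 * R.2.1 p.2) (1 - α⁻¹) := by
  obtain ⟨h, hh⟩ := exists_renyiEnt_eq_coe hP hα
  rw [Kalpha, hh, EReal.iInf_add_coe, ← hh,
    ← ((PMFon.escort_surjective hα).prodMap (PMFon.escort_surjective hα)).iInf_comp
      (g := fun R => negLogPowerMean P (fun p => R.1.1 p.1 * R.2.1 p.2) (1 - α⁻¹))]
  refine iInf_congr fun Q => ?_
  have hQ : ∑ p : X × Y, Q.1.1 p.1 * Q.2.1 p.2 = 1 := by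
    rw [Fintype.sum_prod_type, ← Fintype.sum_mul_sum, Q.1.2, Q.2.2, one_mul]
  rw [relAlphaEnt_add_renyiEnt hP hQ hα, escort_prod Q.1.2 hα.le]
  rfl

/-- `K_α(X;Y) + H_α(X,Y)` is nonincreasing in `α` on `(0, ∞)`. -/
theorem stmt18 {X Y : Type*} [Fintype X] [Fintype Y] (P : X × Y → ℝ≥0∞)
    (hP : ∑ p, P p = 1) (α α' : ℝ) (hα : 0 < α) (h : α ≤ α') :
    Kalpha α' P + renyiEnt α' P ≤ Kalpha α P + renyiEnt α P := by
  rw [Kalpha_add_renyiEnt hP (hα.trans_le h), Kalpha_add_renyiEnt hP hα]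
  refine iInf_mono fun R => negLogPowerMean_antitone hP (fun p => ?_) ?_
  · exact ENNReal.mul_ne_top (ne_top_of_sum_eq_one_s18 R.1.2 p.1) (ne_top_of_sum_eq_one_s18 R.2.2 p.2)
  · exact sub_le_sub_left (inv_anti₀ hα h) 1
end
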